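/- arXiv:2212.09726 — 4 statements merged into one kernel-verified Lean document; each statement's English description precedes it below -/
import Mathlib

section
/- Let Ω be a probability space and let Q, X, X_R, Y be measurable random variables on Ω taking values in finite (nonempty, measurable-singleton) types, such that Y is conditionally independent of X given the pair (Q, X_R). Then I[Y : ⟨Q, X_R⟩] − I[Y : ⟨Q, X⟩] = H[X_R | ⟨X, Q⟩] − H[X_R | ⟨X, Q, Y⟩], where I denotes (Shannon) mutual information and H[· | ·] denotes conditional entropy. -/
open MeasureTheory ProbabilityTheory

/-- Shannon entropy of a random variable `X` taking values in a finite type,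
computed from its distribution `μ.map X`. -/
noncomputable def ent {Ω α : Type*} [MeasurableSpace Ω] [MeasurableSpace α] [Fintype α]
    (μ : Measure Ω) (X : Ω → α) : ℝ :=
  - ∑ a : α, ((μ.map X) {a}).toReal * Real.log ((μ.map X) {a}).toReal

/-- Conditional entropy `H[X | Y] = H[⟨X, Y⟩] - H[Y]`. -/
noncomputable def condEnt {Ω α β : Type*} [MeasurableSpace Ω]
    [MeasurableSpace α] [Fintype α] [MeasurableSpace β] [Fintype β]
    (μ : Measure Ω) (X : Ω → α) (Y : Ω → β) : ℝ :=
  ent μ (fun ω => (X ω, Y ω)) - ent μ Y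

/-- Mutual information `I[X : Y] = H[X] + H[Y] - H[⟨X, Y⟩]`. -/
noncomputable def mutInfo {Ω α β : Type*} [MeasurableSpace Ω]
    [MeasurableSpace α] [Fintype α] [MeasurableSpace β] [Fintype β]
    (μ : Measure Ω) (X : Ω → α) (Y : Ω → β) : ℝ :=
  ent μ X + ent μ Y - ent μ (fun ω => (X ω, Y ω))

/-- Conditional mutual information `I[X : Y | Z] = H[X | Z] - H[X | ⟨Y, Z⟩]`. -/
noncomputable def condMutInfo {Ω α β γ : Type*} [MeasurableSpace Ω]
    [MeasurableSpace α] [Fintype α] [MeasurableSpace β] [Fintype β]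
    [MeasurableSpace γ] [Fintype γ]
    (μ : Measure Ω) (X : Ω → α) (Y : Ω → β) (Z : Ω → γ) : ℝ :=
  condEnt μ X Z - condEnt μ X (fun ω => (Y ω, Z ω))

/-- `Y` is conditionally independent of `X` given `Z` (elementary definition for
finitely-valued random variables): for all values,
`P(Y = y, Z = z) * P(X = x, Z = z) = P(Y = y, X = x, Z = z) * P(Z = z)`. -/
def CondIndepGiven {Ω α β γ : Type*} [MeasurableSpace Ω]
    (μ : Measure Ω) (Y : Ω → γ) (X : Ω → α) (Z : Ω → β) : Prop :=
  ∀ (y : γ) (x : α) (z : β),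
    μ {ω | Y ω = y ∧ Z ω = z} * μ {ω | X ω = x ∧ Z ω = z} =
      μ {ω | Y ω = y ∧ X ω = x ∧ Z ω = z} * μ {ω | Z ω = z}

lemma lem_ent {Ω α : Type*} [MeasurableSpace Ω] [MeasurableSpace α] [Fintype α]
    [MeasurableSingletonClass α] (μ : Measure Ω) (f : Ω → α) (hf : Measurable f) :
    ent μ f = - ∑ a : α, (μ {ω | f ω = a}).toReal * Real.log (μ {ω | f ω = a}).toReal := by
  unfold ent
  congr 1
  refine Finset.sum_congr rfl (fun a _ => ?_)
  rw [Measure.map_apply hf (measurableSet_singleton a)]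
  rfl

lemma lem_fiber_sum {Ω α : Type*} [MeasurableSpace Ω] [MeasurableSpace α] [Fintype α]
    [MeasurableSingletonClass α] (μ : Measure Ω) [IsFiniteMeasure μ]
    (s : Set Ω) (hs : MeasurableSet s) (f : Ω → α) (hf : Measurable f) :
    ∑ a : α, (μ (s ∩ f ⁻¹' {a})).toReal = (μ s).toReal := by
  have h1 : s = ⋃ a : α, s ∩ f ⁻¹' {a} := by ext ω; simp
  have h2 : μ s = ∑ a : α, μ (s ∩ f ⁻¹' {a}) := by
    conv_lhs => rw [h1]
    rw [measure_iUnion ?_ (fun a => hs.inter (hf (measurableSet_singleton a)))]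
    · exact tsum_fintype _
    · intro a b hab
      rw [Function.onFun, Set.disjoint_left]
      rintro ω ⟨-, h1⟩ ⟨-, h2⟩
      exact hab (h1.symm.trans h2)
  rw [h2, ENNReal.toReal_sum (fun a _ => measure_ne_top μ _)]

lemma ci_sum {α β : Type*} [Fintype α] [Fintype β]
    (g : β → α → ℝ) (hg : ∀ y x, 0 ≤ g y x)
    (hCI : ∀ y x, (∑ x', g y x') * (∑ y', g y' x) = g y x * (∑ y', ∑ x', g y' x')) :
    ∑ y, ∑ x, g y x * Real.log (g y x)
      = (∑ y, (∑ x, g y x) * Real.log (∑ x, g y x))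
        + (∑ x, (∑ y, g y x) * Real.log (∑ y, g y x))
        - (∑ y, ∑ x, g y x) * Real.log (∑ y, ∑ x, g y x) := by
  set a : β → ℝ := fun y => ∑ x, g y x with ha
  set b : α → ℝ := fun x => ∑ y, g y x with hb
  set c : ℝ := ∑ y, ∑ x, g y x with hcdef
  have hcb : c = ∑ x, b x := Finset.sum_comm
  have ha_nonneg : ∀ y, 0 ≤ a y := fun y => Finset.sum_nonneg (fun x _ => hg y x)
  have hb_nonneg : ∀ x, 0 ≤ b x := fun x => Finset.sum_nonneg (fun y _ => hg y x)
  have hga : ∀ y x, g y x ≤ a y := fun y x =>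
    Finset.single_le_sum (fun x' _ => hg y x') (Finset.mem_univ x)
  have hgb : ∀ y x, g y x ≤ b x := fun y x =>
    Finset.single_le_sum (fun y' _ => hg y' x) (Finset.mem_univ y)
  by_cases hc0 : c = 0
  · have haz : ∀ y, a y = 0 := by
      intro y
      exact (Finset.sum_eq_zero_iff_of_nonneg (fun y' _ => ha_nonneg y')).1 hc0 y
        (Finset.mem_univ y)
    have hg0 : ∀ y x, g y x = 0 := fun y x =>
      le_antisymm ((haz y) ▸ hga y x) (hg y x)
    have hbz : ∀ x, b x = 0 := fun x => by simp [hb, hg0]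
    simp [hg0, haz, hbz, hc0]
  · have hpoint : ∀ y x, g y x * Real.log (g y x)
        = a y * b x / c * (Real.log (a y) + Real.log (b x) - Real.log c) := by
      intro y x
      by_cases hay : a y = 0
      · have : g y x = 0 := le_antisymm (hay ▸ hga y x) (hg y x)
        simp [this, hay]
      by_cases hbx : b x = 0
      · have : g y x = 0 := le_antisymm (hbx ▸ hgb y x) (hg y x)
        simp [this, hbx]
      have hgab : g y x = a y * b x / c := by
        field_simp
        linarith [hCI y x]
      rw [hgab, Real.log_div (by positivity) hc0, Real.log_mul hay hbx]
    have hsum1 : ∀ y, ∑ x, g y x * Real.log (g y x)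
        = a y * Real.log (a y) + (∑ x, (a y / c) * (b x * Real.log (b x)))
          - a y * Real.log c := by
      intro y
      rw [Finset.sum_congr rfl (fun x _ => hpoint y x)]
      have e1 : ∀ x : α, a y * b x / c * (Real.log (a y) + Real.log (b x) - Real.log c)
          = (a y * Real.log (a y) / c) * b x + (a y / c) * (b x * Real.log (b x))
            - (a y * Real.log c / c) * b x := by intro x; ring
      rw [Finset.sum_congr rfl (fun x _ => e1 x)]
      rw [Finset.sum_sub_distrib, Finset.sum_add_distrib]
      have t1 : ∑ x : α, (a y * Real.log (a y) / c) * b x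
          = a y * Real.log (a y) / c * ∑ x, b x := by rw [Finset.mul_sum]
      have t3 : ∑ x : α, (a y * Real.log c / c) * b x
          = a y * Real.log c / c * ∑ x, b x := by rw [Finset.mul_sum]
      rw [t1, t3, ← hcb]
      field_simp
      try ring
    rw [Finset.sum_congr rfl (fun y _ => hsum1 y)]
    rw [Finset.sum_sub_distrib, Finset.sum_add_distrib]
    have e2 : ∑ y : β, ∑ x : α, (a y / c) * (b x * Real.log (b x))
        = ∑ x, b x * Real.log (b x) := by
      rw [Finset.sum_comm]
      refine Finset.sum_congr rfl (fun x _ => ?_)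
      rw [← Finset.sum_mul, ← Finset.sum_div]
      rw [div_mul_eq_mul_div, mul_comm, mul_div_assoc, div_self hc0, mul_one]
    have e3 : ∑ y : β, a y * Real.log c = c * Real.log c := by
      rw [← Finset.sum_mul]
    rw [e2, e3]

section entexp
variable {Ω A B C D : Type*} [MeasurableSpace Ω]
  [MeasurableSpace A] [Fintype A] [MeasurableSingletonClass A]
  [MeasurableSpace B] [Fintype B] [MeasurableSingletonClass B]
  [MeasurableSpace C] [Fintype C] [MeasurableSingletonClass C]
  [MeasurableSpace D] [Fintype D] [MeasurableSingletonClass D]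

lemma ent_pair (μ : Measure Ω) (f : Ω → A) (g : Ω → B)
    (hf : Measurable f) (hg : Measurable g) :
    ent μ (fun ω => (f ω, g ω))
      = - ∑ a, ∑ b, (μ {ω | f ω = a ∧ g ω = b}).toReal
          * Real.log (μ {ω | f ω = a ∧ g ω = b}).toReal := by
  rw [lem_ent μ _ (hf.prodMk hg), Fintype.sum_prod_type]
  simp only [Prod.mk.injEq]

lemma ent_triple (μ : Measure Ω) (f : Ω → A) (g : Ω → B) (h : Ω → C)
    (hf : Measurable f) (hg : Measurable g) (hh : Measurable h) :
    ent μ (fun ω => (f ω, g ω, h ω))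
      = - ∑ a, ∑ b, ∑ c, (μ {ω | f ω = a ∧ g ω = b ∧ h ω = c}).toReal
          * Real.log (μ {ω | f ω = a ∧ g ω = b ∧ h ω = c}).toReal := by
  rw [lem_ent μ _ (hf.prodMk (hg.prodMk hh))]
  simp only [Fintype.sum_prod_type, Prod.mk.injEq]

lemma ent_quad (μ : Measure Ω) (f : Ω → A) (g : Ω → B) (h : Ω → C) (k : Ω → D)
    (hf : Measurable f) (hg : Measurable g) (hh : Measurable h) (hk : Measurable k) :
    ent μ (fun ω => (f ω, g ω, h ω, k ω))
      = - ∑ a, ∑ b, ∑ c, ∑ d,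
          (μ {ω | f ω = a ∧ g ω = b ∧ h ω = c ∧ k ω = d}).toReal
          * Real.log (μ {ω | f ω = a ∧ g ω = b ∧ h ω = c ∧ k ω = d}).toReal := by
  rw [lem_ent μ _ (hf.prodMk (hg.prodMk (hh.prodMk hk)))]
  simp only [Fintype.sum_prod_type, Prod.mk.injEq]

end entexp

section sums
variable {A B C D : Type*} [Fintype A] [Fintype B] [Fintype C] [Fintype D]

lemma sum3 (F : A → B → C → ℝ) :
    ∑ a, ∑ b, ∑ c, F a b c = ∑ c, ∑ a, ∑ b, F a b c := by
  rw [show (∑ a, ∑ b, ∑ c, F a b c) = ∑ a, ∑ c, ∑ b, F a b c from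
    Finset.sum_congr rfl fun a _ => Finset.sum_comm, Finset.sum_comm]

lemma sum3rev (F : A → B → C → ℝ) :
    ∑ a, ∑ b, ∑ c, F a b c = ∑ c, ∑ b, ∑ a, F a b c := by
  rw [show (∑ a, ∑ b, ∑ c, F a b c) = ∑ a, ∑ c, ∑ b, F a b c from
    Finset.sum_congr rfl fun a _ => Finset.sum_comm, Finset.sum_comm]
  exact Finset.sum_congr rfl fun c _ => Finset.sum_comm

lemma sum4p (F : A → B → C → D → ℝ) :
    ∑ a, ∑ b, ∑ c, ∑ d, F a b c d = ∑ c, ∑ a, ∑ d, ∑ b, F a b c d := by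
  rw [show (∑ a, ∑ b, ∑ c, ∑ d, F a b c d) = ∑ a, ∑ c, ∑ b, ∑ d, F a b c d from
    Finset.sum_congr rfl fun a _ => Finset.sum_comm, Finset.sum_comm]
  exact Finset.sum_congr rfl fun c _ => Finset.sum_congr rfl fun a _ => Finset.sum_comm

end sums

lemma phi_congr {Ω : Type*} [MeasurableSpace Ω] (μ : Measure Ω) {s t : Set Ω} (h : s = t) :
    (μ s).toReal * Real.log (μ s).toReal = (μ t).toReal * Real.log (μ t).toReal := by rw [h]

variable {Ω TQ TX TR TY : Type*} [MeasurableSpace Ω]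
  [MeasurableSpace TQ] [Fintype TQ] [Nonempty TQ] [MeasurableSingletonClass TQ]
  [MeasurableSpace TX] [Fintype TX] [Nonempty TX] [MeasurableSingletonClass TX]
  [MeasurableSpace TR] [Fintype TR] [Nonempty TR] [MeasurableSingletonClass TR]
  [MeasurableSpace TY] [Fintype TY] [Nonempty TY] [MeasurableSingletonClass TY]

/-- Theorem 1 of the paper: under the Markov assumption that `Y ⟂ X | (Q, X_R)`,
`CE(X_{R^c}) = I[Y : ⟨Q, X_R⟩] − I[Y : ⟨Q, X⟩] = H[X_R | ⟨X, Q⟩] − H[X_R | ⟨X, Q, Y⟩]`. -/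
theorem stmt0 (μ : Measure Ω) [IsProbabilityMeasure μ]
    (Q : Ω → TQ) (X : Ω → TX) (XR : Ω → TR) (Y : Ω → TY)
    (hQ : Measurable Q) (hX : Measurable X) (hXR : Measurable XR) (hY : Measurable Y)
    (hCI : CondIndepGiven μ Y X (fun ω => (Q ω, XR ω))) :
    mutInfo μ Y (fun ω => (Q ω, XR ω)) - mutInfo μ Y (fun ω => (Q ω, X ω)) =
      condEnt μ XR (fun ω => (X ω, Q ω)) - condEnt μ XR (fun ω => (X ω, Q ω, Y ω)) := by
  classical
  -- measurable sets
  have hMyqr : ∀ (y : TY) (q : TQ) (r : TR),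
      MeasurableSet {ω | Y ω = y ∧ Q ω = q ∧ XR ω = r} := fun y q r =>
    (hY (measurableSet_singleton y)).inter
      ((hQ (measurableSet_singleton q)).inter (hXR (measurableSet_singleton r)))
  have hMxqr : ∀ (x : TX) (q : TQ) (r : TR),
      MeasurableSet {ω | X ω = x ∧ Q ω = q ∧ XR ω = r} := fun x q r =>
    (hX (measurableSet_singleton x)).inter
      ((hQ (measurableSet_singleton q)).inter (hXR (measurableSet_singleton r)))
  have hMqr : ∀ (q : TQ) (r : TR), MeasurableSet {ω | Q ω = q ∧ XR ω = r} := fun q r =>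
    (hQ (measurableSet_singleton q)).inter (hXR (measurableSet_singleton r))
  -- marginal sums
  have m1 : ∀ (y : TY) (q : TQ) (r : TR),
      ∑ x : TX, (μ {ω | Y ω = y ∧ X ω = x ∧ Q ω = q ∧ XR ω = r}).toReal
        = (μ {ω | Y ω = y ∧ Q ω = q ∧ XR ω = r}).toReal := by
    intro y q r
    rw [← lem_fiber_sum μ _ (hMyqr y q r) X hX]
    refine Finset.sum_congr rfl fun x _ => ?_
    congr 2
    ext ω
    simp only [Set.mem_setOf_eq, Set.mem_inter_iff, Set.mem_preimage, Set.mem_singleton_iff]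
    tauto
  have m2 : ∀ (x : TX) (q : TQ) (r : TR),
      ∑ y : TY, (μ {ω | Y ω = y ∧ X ω = x ∧ Q ω = q ∧ XR ω = r}).toReal
        = (μ {ω | X ω = x ∧ Q ω = q ∧ XR ω = r}).toReal := by
    intro x q r
    rw [← lem_fiber_sum μ _ (hMxqr x q r) Y hY]
    refine Finset.sum_congr rfl fun y _ => ?_
    congr 2
    ext ω
    simp only [Set.mem_setOf_eq, Set.mem_inter_iff, Set.mem_preimage, Set.mem_singleton_iff]
    tauto
  have m3 : ∀ (q : TQ) (r : TR),
      ∑ y : TY, (μ {ω | Y ω = y ∧ Q ω = q ∧ XR ω = r}).toReal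
        = (μ {ω | Q ω = q ∧ XR ω = r}).toReal := by
    intro q r
    rw [← lem_fiber_sum μ _ (hMqr q r) Y hY]
    refine Finset.sum_congr rfl fun y _ => ?_
    congr 2
    ext ω
    simp only [Set.mem_setOf_eq, Set.mem_inter_iff, Set.mem_preimage, Set.mem_singleton_iff]
    tauto
  -- conditional independence, real-valued form
  have hCI' : ∀ (y : TY) (x : TX) (q : TQ) (r : TR),
      (μ {ω | Y ω = y ∧ Q ω = q ∧ XR ω = r}).toReal
        * (μ {ω | X ω = x ∧ Q ω = q ∧ XR ω = r}).toReal
      = (μ {ω | Y ω = y ∧ X ω = x ∧ Q ω = q ∧ XR ω = r}).toReal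
        * (μ {ω | Q ω = q ∧ XR ω = r}).toReal := by
    intro y x q r
    have h := hCI y x (q, r)
    simp only [Prod.mk.injEq] at h
    rw [← ENNReal.toReal_mul, ← ENNReal.toReal_mul, h]
  -- key conditional-independence identity per (q, r)
  have hkey : ∀ (q : TQ) (r : TR),
      ∑ y : TY, ∑ x : TX,
          (μ {ω | Y ω = y ∧ X ω = x ∧ Q ω = q ∧ XR ω = r}).toReal
            * Real.log (μ {ω | Y ω = y ∧ X ω = x ∧ Q ω = q ∧ XR ω = r}).toReal
        = (∑ y : TY, (μ {ω | Y ω = y ∧ Q ω = q ∧ XR ω = r}).toReal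
              * Real.log (μ {ω | Y ω = y ∧ Q ω = q ∧ XR ω = r}).toReal)
          + (∑ x : TX, (μ {ω | X ω = x ∧ Q ω = q ∧ XR ω = r}).toReal
              * Real.log (μ {ω | X ω = x ∧ Q ω = q ∧ XR ω = r}).toReal)
          - (μ {ω | Q ω = q ∧ XR ω = r}).toReal
              * Real.log (μ {ω | Q ω = q ∧ XR ω = r}).toReal := by
    intro q r
    have h := ci_sum
      (fun y x => (μ {ω | Y ω = y ∧ X ω = x ∧ Q ω = q ∧ XR ω = r}).toReal)
      (fun y x => ENNReal.toReal_nonneg)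
      (by
        intro y x
        simp only [m1, m2, m3]
        exact hCI' y x q r)
    simp only [m1, m2, m3] at h
    exact h
  -- expand all entropies
  simp only [mutInfo, condEnt]
  rw [ent_pair μ Q XR hQ hXR, ent_triple μ Y Q XR hY hQ hXR,
    ent_pair μ Q X hQ hX, ent_triple μ Y Q X hY hQ hX,
    ent_triple μ XR X Q hXR hX hQ, ent_pair μ X Q hX hQ,
    ent_quad μ XR X Q Y hXR hX hQ hY, ent_triple μ X Q Y hX hQ hY]
  -- step A : H(Q,X) = H(X,Q)
  have stepA : ∑ q : TQ, ∑ x : TX, (μ {ω | Q ω = q ∧ X ω = x}).toReal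
        * Real.log (μ {ω | Q ω = q ∧ X ω = x}).toReal
      = ∑ x : TX, ∑ q : TQ, (μ {ω | X ω = x ∧ Q ω = q}).toReal
        * Real.log (μ {ω | X ω = x ∧ Q ω = q}).toReal := by
    rw [Finset.sum_comm]
    exact Finset.sum_congr rfl fun x _ => Finset.sum_congr rfl fun q _ =>
      phi_congr μ (by ext ω; simp only [Set.mem_setOf_eq]; tauto)
  -- step B : H(Y,Q,X) = H(X,Q,Y)
  have stepB : ∑ y : TY, ∑ q : TQ, ∑ x : TX, (μ {ω | Y ω = y ∧ Q ω = q ∧ X ω = x}).toReal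
        * Real.log (μ {ω | Y ω = y ∧ Q ω = q ∧ X ω = x}).toReal
      = ∑ x : TX, ∑ q : TQ, ∑ y : TY, (μ {ω | X ω = x ∧ Q ω = q ∧ Y ω = y}).toReal
        * Real.log (μ {ω | X ω = x ∧ Q ω = q ∧ Y ω = y}).toReal := by
    rw [sum3rev]
    exact Finset.sum_congr rfl fun x _ => Finset.sum_congr rfl fun q _ =>
      Finset.sum_congr rfl fun y _ =>
        phi_congr μ (by ext ω; simp only [Set.mem_setOf_eq]; tauto)
  -- summed key identity
  have hC : ∑ q : TQ, ∑ r : TR, ∑ y : TY, ∑ x : TX,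
        (μ {ω | Y ω = y ∧ X ω = x ∧ Q ω = q ∧ XR ω = r}).toReal
          * Real.log (μ {ω | Y ω = y ∧ X ω = x ∧ Q ω = q ∧ XR ω = r}).toReal
      = (∑ q : TQ, ∑ r : TR, ∑ y : TY, (μ {ω | Y ω = y ∧ Q ω = q ∧ XR ω = r}).toReal
          * Real.log (μ {ω | Y ω = y ∧ Q ω = q ∧ XR ω = r}).toReal)
        + (∑ q : TQ, ∑ r : TR, ∑ x : TX, (μ {ω | X ω = x ∧ Q ω = q ∧ XR ω = r}).toReal
          * Real.log (μ {ω | X ω = x ∧ Q ω = q ∧ XR ω = r}).toReal)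
        - (∑ q : TQ, ∑ r : TR, (μ {ω | Q ω = q ∧ XR ω = r}).toReal
          * Real.log (μ {ω | Q ω = q ∧ XR ω = r}).toReal) := by
    rw [Finset.sum_congr rfl fun q (_ : q ∈ Finset.univ) =>
      Finset.sum_congr rfl fun r (_ : r ∈ Finset.univ) => hkey q r]
    simp only [Finset.sum_sub_distrib, Finset.sum_add_distrib]
  -- reindexings
  have hT2 : ∑ y : TY, ∑ q : TQ, ∑ r : TR, (μ {ω | Y ω = y ∧ Q ω = q ∧ XR ω = r}).toReal
        * Real.log (μ {ω | Y ω = y ∧ Q ω = q ∧ XR ω = r}).toReal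
      = ∑ q : TQ, ∑ r : TR, ∑ y : TY, (μ {ω | Y ω = y ∧ Q ω = q ∧ XR ω = r}).toReal
        * Real.log (μ {ω | Y ω = y ∧ Q ω = q ∧ XR ω = r}).toReal :=
    (sum3 fun q r y => (μ {ω | Y ω = y ∧ Q ω = q ∧ XR ω = r}).toReal
        * Real.log (μ {ω | Y ω = y ∧ Q ω = q ∧ XR ω = r}).toReal).symm
  have hT5 : ∑ r : TR, ∑ x : TX, ∑ q : TQ, (μ {ω | XR ω = r ∧ X ω = x ∧ Q ω = q}).toReal
        * Real.log (μ {ω | XR ω = r ∧ X ω = x ∧ Q ω = q}).toReal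
      = ∑ q : TQ, ∑ r : TR, ∑ x : TX, (μ {ω | X ω = x ∧ Q ω = q ∧ XR ω = r}).toReal
        * Real.log (μ {ω | X ω = x ∧ Q ω = q ∧ XR ω = r}).toReal := by
    rw [sum3 fun r x q => (μ {ω | XR ω = r ∧ X ω = x ∧ Q ω = q}).toReal
        * Real.log (μ {ω | XR ω = r ∧ X ω = x ∧ Q ω = q}).toReal]
    exact Finset.sum_congr rfl fun q _ => Finset.sum_congr rfl fun r _ =>
      Finset.sum_congr rfl fun x _ =>
        phi_congr μ (by ext ω; simp only [Set.mem_setOf_eq]; tauto)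
  have hT7 : ∑ r : TR, ∑ x : TX, ∑ q : TQ, ∑ y : TY,
        (μ {ω | XR ω = r ∧ X ω = x ∧ Q ω = q ∧ Y ω = y}).toReal
          * Real.log (μ {ω | XR ω = r ∧ X ω = x ∧ Q ω = q ∧ Y ω = y}).toReal
      = ∑ q : TQ, ∑ r : TR, ∑ y : TY, ∑ x : TX,
        (μ {ω | Y ω = y ∧ X ω = x ∧ Q ω = q ∧ XR ω = r}).toReal
          * Real.log (μ {ω | Y ω = y ∧ X ω = x ∧ Q ω = q ∧ XR ω = r}).toReal := by
    rw [sum4p fun r x q y => (μ {ω | XR ω = r ∧ X ω = x ∧ Q ω = q ∧ Y ω = y}).toReal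
        * Real.log (μ {ω | XR ω = r ∧ X ω = x ∧ Q ω = q ∧ Y ω = y}).toReal]
    exact Finset.sum_congr rfl fun q _ => Finset.sum_congr rfl fun r _ =>
      Finset.sum_congr rfl fun y _ => Finset.sum_congr rfl fun x _ =>
        phi_congr μ (by ext ω; simp only [Set.mem_setOf_eq]; tauto)
  linarith [stepA, stepB, hC, hT2, hT5, hT7]
end

section
/- Let Ω be a probability space and let Q, X, X_R, Y be measurable random variables on Ω taking values in finite (nonempty, measurable-singleton) types, such that Y is conditionally independent of X given the pair (Q, X_R). Then H[Y | ⟨Q, X⟩] = H[Y | ⟨Q, X_R⟩] + (H[X_R | ⟨X, Q⟩] − H[X_R | ⟨X, Q, Y⟩]), where H[· | ·] denotes conditional entropy. -/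
open MeasureTheory ProbabilityTheory

section aux
variable {Ω : Type*} [MeasurableSpace Ω]


lemma ent_eq_sum_preimage {α : Type*} [MeasurableSpace α] [Fintype α] [MeasurableSingletonClass α]
    (μ : Measure Ω) (f : Ω → α) (hf : Measurable f) :
    ent μ f = - ∑ a : α, (μ (f ⁻¹' {a})).toReal * Real.log (μ (f ⁻¹' {a})).toReal := by
  unfold ent
  congr 1
  refine Finset.sum_congr rfl fun a _ => ?_
  rw [Measure.map_apply hf (measurableSet_singleton a)]

lemma ent_comp_inj {α β : Type*} [MeasurableSpace α] [Fintype α] [MeasurableSingletonClass α]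
    [MeasurableSpace β] [Fintype β] [MeasurableSingletonClass β]
    (μ : Measure Ω) (f : Ω → α) (hf : Measurable f) (e : α → β) (he : Function.Injective e) :
    ent μ (fun ω => e (f ω)) = ent μ f := by
  classical
  have hme : Measurable e := measurable_of_countable e
  have hef : Measurable (fun ω => e (f ω)) := hme.comp hf
  rw [ent_eq_sum_preimage μ f hf, ent_eq_sum_preimage μ _ hef]
  congr 1
  set F : β → ℝ := fun b => (μ ((fun ω => e (f ω)) ⁻¹' {b})).toReal *
      Real.log (μ ((fun ω => e (f ω)) ⁻¹' {b})).toReal with hF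
  have h1 : ∑ b : β, F b = ∑ b ∈ Finset.univ.image e, F b := by
    refine (Finset.sum_subset (Finset.subset_univ _) fun b _ hb => ?_).symm
    have hpre : (fun ω => e (f ω)) ⁻¹' {b} = ∅ := by
      ext ω
      simp only [Set.mem_preimage, Set.mem_singleton_iff, Set.mem_empty_iff_false, iff_false]
      intro h
      exact hb (Finset.mem_image.2 ⟨f ω, Finset.mem_univ _, h⟩)
    simp [hF, hpre]
  rw [h1, Finset.sum_image (fun a _ b _ h => he h)]
  refine Finset.sum_congr rfl fun a _ => ?_
  have : (fun ω => e (f ω)) ⁻¹' {e a} = f ⁻¹' {a} := by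
    ext ω; simp [he.eq_iff]
  simp [hF, this]



lemma marginal_sum {α : Type*} [MeasurableSpace α] [Fintype α] [MeasurableSingletonClass α]
    (μ : Measure Ω) (X : Ω → α) (hX : Measurable X) (t : Set Ω) (ht : MeasurableSet t) :
    ∑ x : α, μ (t ∩ X ⁻¹' {x}) = μ t := by
  have hu : t = ⋃ x : α, t ∩ X ⁻¹' {x} := by
    ext ω; simp
  have hd : Pairwise (Function.onFun Disjoint fun x : α => t ∩ X ⁻¹' {x}) := by
    intro i j hij
    simp only [Function.onFun, Set.disjoint_left]
    rintro ω ⟨-, hi⟩ ⟨-, hj⟩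
    exact hij (hi.symm.trans hj)
  rw [← tsum_fintype (L := SummationFilter.unconditional _)]
  rw [← measure_iUnion hd fun x => ht.inter (hX (measurableSet_singleton x))]
  exact congrArg μ hu.symm

lemma ci_ent {α β γ : Type*}
    [MeasurableSpace γ] [Fintype γ] [MeasurableSingletonClass γ]
    [MeasurableSpace α] [Fintype α] [MeasurableSingletonClass α]
    [MeasurableSpace β] [Fintype β] [MeasurableSingletonClass β]
    (μ : Measure Ω) [IsProbabilityMeasure μ]
    (Y : Ω → γ) (X : Ω → α) (Z : Ω → β)
    (hY : Measurable Y) (hX : Measurable X) (hZ : Measurable Z)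
    (hCI : CondIndepGiven μ Y X Z) :
    ent μ (fun ω => (Y ω, X ω, Z ω)) + ent μ Z =
      ent μ (fun ω => (Y ω, Z ω)) + ent μ (fun ω => (X ω, Z ω)) := by
  classical
  -- point probabilities
  set p3 : γ → α → β → ℝ := fun y x z => (μ {ω | Y ω = y ∧ X ω = x ∧ Z ω = z}).toReal with hp3
  set pyz : γ → β → ℝ := fun y z => (μ {ω | Y ω = y ∧ Z ω = z}).toReal with hpyz
  set pxz : α → β → ℝ := fun x z => (μ {ω | X ω = x ∧ Z ω = z}).toReal with hpxz
  set pz : β → ℝ := fun z => (μ {ω | Z ω = z}).toReal with hpz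
  -- measurability of level sets
  have msYZ : ∀ (y : γ) (z : β), MeasurableSet {ω | Y ω = y ∧ Z ω = z} := by
    intro y z
    have : {ω | Y ω = y ∧ Z ω = z} = Y ⁻¹' {y} ∩ Z ⁻¹' {z} := by ext ω; simp
    rw [this]; exact (hY (measurableSet_singleton y)).inter (hZ (measurableSet_singleton z))
  have msXZ : ∀ (x : α) (z : β), MeasurableSet {ω | X ω = x ∧ Z ω = z} := by
    intro x z
    have : {ω | X ω = x ∧ Z ω = z} = X ⁻¹' {x} ∩ Z ⁻¹' {z} := by ext ω; simp
    rw [this]; exact (hX (measurableSet_singleton x)).inter (hZ (measurableSet_singleton z))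
  have msZ : ∀ (z : β), MeasurableSet {ω | Z ω = z} := by
    intro z
    have : {ω | Z ω = z} = Z ⁻¹' {z} := rfl
    rw [this]; exact hZ (measurableSet_singleton z)
  -- marginals
  have mX : ∀ (y : γ) (z : β), ∑ x : α, p3 y x z = pyz y z := by
    intro y z
    have hset : ∀ x : α, {ω | Y ω = y ∧ X ω = x ∧ Z ω = z} =
        {ω | Y ω = y ∧ Z ω = z} ∩ X ⁻¹' {x} := by
      intro x; ext ω
      simp only [Set.mem_setOf_eq, Set.mem_inter_iff, Set.mem_preimage, Set.mem_singleton_iff]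
      tauto
    have hsum : ∑ x : α, μ {ω | Y ω = y ∧ X ω = x ∧ Z ω = z} = μ {ω | Y ω = y ∧ Z ω = z} := by
      simp_rw [hset]; exact marginal_sum μ X hX _ (msYZ y z)
    simp only [hp3, hpyz]
    rw [← ENNReal.toReal_sum (fun _ _ => measure_ne_top μ _), hsum]
  have mY : ∀ (x : α) (z : β), ∑ y : γ, p3 y x z = pxz x z := by
    intro x z
    have hset : ∀ y : γ, {ω | Y ω = y ∧ X ω = x ∧ Z ω = z} =
        {ω | X ω = x ∧ Z ω = z} ∩ Y ⁻¹' {y} := by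
      intro y; ext ω
      simp only [Set.mem_setOf_eq, Set.mem_inter_iff, Set.mem_preimage, Set.mem_singleton_iff]
      tauto
    have hsum : ∑ y : γ, μ {ω | Y ω = y ∧ X ω = x ∧ Z ω = z} = μ {ω | X ω = x ∧ Z ω = z} := by
      simp_rw [hset]; exact marginal_sum μ Y hY _ (msXZ x z)
    simp only [hp3, hpxz]
    rw [← ENNReal.toReal_sum (fun _ _ => measure_ne_top μ _), hsum]
  have mXZ : ∀ (z : β), ∑ x : α, pxz x z = pz z := by
    intro z
    have hset : ∀ x : α, {ω | X ω = x ∧ Z ω = z} = {ω | Z ω = z} ∩ X ⁻¹' {x} := by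
      intro x; ext ω
      simp only [Set.mem_setOf_eq, Set.mem_inter_iff, Set.mem_preimage, Set.mem_singleton_iff]
      tauto
    have hsum : ∑ x : α, μ {ω | X ω = x ∧ Z ω = z} = μ {ω | Z ω = z} := by
      simp_rw [hset]; exact marginal_sum μ X hX _ (msZ z)
    simp only [hpxz, hpz]
    rw [← ENNReal.toReal_sum (fun _ _ => measure_ne_top μ _), hsum]
  -- pointwise key identity
  have key : ∀ (y : γ) (x : α) (z : β), p3 y x z * Real.log (p3 y x z) =
      p3 y x z * Real.log (pyz y z) + p3 y x z * Real.log (pxz x z)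
        - p3 y x z * Real.log (pz z) := by
    intro y x z
    by_cases h0 : p3 y x z = 0
    · simp [h0]
    · have h3pos : 0 < p3 y x z :=
        lt_of_le_of_ne ENNReal.toReal_nonneg (Ne.symm h0)
      have hle1 : p3 y x z ≤ pyz y z :=
        ENNReal.toReal_mono (measure_ne_top μ _) (measure_mono fun ω h => ⟨h.1, h.2.2⟩)
      have hle2 : p3 y x z ≤ pxz x z :=
        ENNReal.toReal_mono (measure_ne_top μ _) (measure_mono fun ω h => ⟨h.2.1, h.2.2⟩)
      have hle3 : p3 y x z ≤ pz z :=
        ENNReal.toReal_mono (measure_ne_top μ _) (measure_mono fun ω h => h.2.2)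
      have h1pos : 0 < pyz y z := lt_of_lt_of_le h3pos hle1
      have h2pos : 0 < pxz x z := lt_of_lt_of_le h3pos hle2
      have hzpos : 0 < pz z := lt_of_lt_of_le h3pos hle3
      have hr : pyz y z * pxz x z = p3 y x z * pz z := by
        have h := congrArg ENNReal.toReal (hCI y x z)
        rwa [ENNReal.toReal_mul, ENNReal.toReal_mul] at h
      have hdiv : p3 y x z = pyz y z * pxz x z / pz z := by
        rw [hr]; field_simp
      rw [hdiv, Real.log_div (by positivity) hzpos.ne',
        Real.log_mul h1pos.ne' h2pos.ne']
      ring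
  -- entropies as sums
  have e3 : ent μ (fun ω => (Y ω, X ω, Z ω)) =
      - ∑ y : γ, ∑ x : α, ∑ z : β, p3 y x z * Real.log (p3 y x z) := by
    rw [ent_eq_sum_preimage μ _ (hY.prodMk (hX.prodMk hZ))]
    simp only [Fintype.sum_prod_type]
    refine congrArg Neg.neg (Finset.sum_congr rfl fun y _ => Finset.sum_congr rfl
      fun x _ => Finset.sum_congr rfl fun z _ => ?_)
    have : (fun ω => (Y ω, X ω, Z ω)) ⁻¹' {(y, x, z)} = {ω | Y ω = y ∧ X ω = x ∧ Z ω = z} := by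
      ext ω; simp [Prod.ext_iff]
    rw [this]
  have eYZ : ent μ (fun ω => (Y ω, Z ω)) =
      - ∑ y : γ, ∑ z : β, pyz y z * Real.log (pyz y z) := by
    rw [ent_eq_sum_preimage μ _ (hY.prodMk hZ)]
    simp only [Fintype.sum_prod_type]
    refine congrArg Neg.neg (Finset.sum_congr rfl fun y _ => Finset.sum_congr rfl fun z _ => ?_)
    have : (fun ω => (Y ω, Z ω)) ⁻¹' {(y, z)} = {ω | Y ω = y ∧ Z ω = z} := by
      ext ω; simp [Prod.ext_iff]
    rw [this]
  have eXZ : ent μ (fun ω => (X ω, Z ω)) =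
      - ∑ x : α, ∑ z : β, pxz x z * Real.log (pxz x z) := by
    rw [ent_eq_sum_preimage μ _ (hX.prodMk hZ)]
    simp only [Fintype.sum_prod_type]
    refine congrArg Neg.neg (Finset.sum_congr rfl fun x _ => Finset.sum_congr rfl fun z _ => ?_)
    have : (fun ω => (X ω, Z ω)) ⁻¹' {(x, z)} = {ω | X ω = x ∧ Z ω = z} := by
      ext ω; simp [Prod.ext_iff]
    rw [this]
  have eZ : ent μ Z = - ∑ z : β, pz z * Real.log (pz z) := by
    rw [ent_eq_sum_preimage μ _ hZ]
    refine congrArg Neg.neg (Finset.sum_congr rfl fun z _ => ?_)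
    rfl
  -- sum manipulations
  have hA : ∑ y : γ, ∑ x : α, ∑ z : β, p3 y x z * Real.log (pyz y z) =
      ∑ y : γ, ∑ z : β, pyz y z * Real.log (pyz y z) := by
    refine Finset.sum_congr rfl fun y _ => ?_
    rw [Finset.sum_comm]
    refine Finset.sum_congr rfl fun z _ => ?_
    rw [← Finset.sum_mul, mX y z]
  have hB : ∑ y : γ, ∑ x : α, ∑ z : β, p3 y x z * Real.log (pxz x z) =
      ∑ x : α, ∑ z : β, pxz x z * Real.log (pxz x z) := by
    rw [Finset.sum_comm]
    refine Finset.sum_congr rfl fun x _ => ?_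
    rw [Finset.sum_comm]
    refine Finset.sum_congr rfl fun z _ => ?_
    rw [← Finset.sum_mul, mY x z]
  have hC : ∑ y : γ, ∑ x : α, ∑ z : β, p3 y x z * Real.log (pz z) =
      ∑ z : β, pz z * Real.log (pz z) := by
    rw [Finset.sum_comm]
    have : ∀ x : α, ∑ y : γ, ∑ z : β, p3 y x z * Real.log (pz z) =
        ∑ z : β, pxz x z * Real.log (pz z) := by
      intro x
      rw [Finset.sum_comm]
      refine Finset.sum_congr rfl fun z _ => ?_
      rw [← Finset.sum_mul, mY x z]
    simp_rw [this]
    rw [Finset.sum_comm]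
    refine Finset.sum_congr rfl fun z _ => ?_
    rw [← Finset.sum_mul, mXZ z]
  have hS : ∑ y : γ, ∑ x : α, ∑ z : β, p3 y x z * Real.log (p3 y x z) =
      (∑ y : γ, ∑ x : α, ∑ z : β, p3 y x z * Real.log (pyz y z)) +
      (∑ y : γ, ∑ x : α, ∑ z : β, p3 y x z * Real.log (pxz x z)) -
      (∑ y : γ, ∑ x : α, ∑ z : β, p3 y x z * Real.log (pz z)) := by
    have h1 : ∑ y : γ, ∑ x : α, ∑ z : β, p3 y x z * Real.log (p3 y x z) =
        ∑ y : γ, ∑ x : α, ∑ z : β, (p3 y x z * Real.log (pyz y z) +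
          p3 y x z * Real.log (pxz x z) - p3 y x z * Real.log (pz z)) :=
      Finset.sum_congr rfl fun y _ => Finset.sum_congr rfl fun x _ =>
        Finset.sum_congr rfl fun z _ => key y x z
    rw [h1]
    simp only [Finset.sum_add_distrib, Finset.sum_sub_distrib]
  rw [e3, eYZ, eXZ, eZ, hS, hA, hB, hC]
  ring

end aux

variable {Ω TQ TX TR TY : Type*} [MeasurableSpace Ω]
  [MeasurableSpace TQ] [Fintype TQ] [Nonempty TQ] [MeasurableSingletonClass TQ]
  [MeasurableSpace TX] [Fintype TX] [Nonempty TX] [MeasurableSingletonClass TX]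
  [MeasurableSpace TR] [Fintype TR] [Nonempty TR] [MeasurableSingletonClass TR]
  [MeasurableSpace TY] [Fintype TY] [Nonempty TY] [MeasurableSingletonClass TY]

/-- Theorem 2 combined with Theorem 1: under the Markov assumption `Y ⟂ X | (Q, X_R)`,
`l(f) = H[Y | ⟨Q, X⟩] = H[Y | ⟨Q, X_R⟩] + (H[X_R | ⟨X, Q⟩] − H[X_R | ⟨X, Q, Y⟩])`. -/
theorem stmt5 (μ : Measure Ω) [IsProbabilityMeasure μ]
    (Q : Ω → TQ) (X : Ω → TX) (XR : Ω → TR) (Y : Ω → TY)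
    (hQ : Measurable Q) (hX : Measurable X) (hXR : Measurable XR) (hY : Measurable Y)
    (hCI : CondIndepGiven μ Y X (fun ω => (Q ω, XR ω))) :
    condEnt μ Y (fun ω => (Q ω, X ω)) =
      condEnt μ Y (fun ω => (Q ω, XR ω)) +
        (condEnt μ XR (fun ω => (X ω, Q ω)) - condEnt μ XR (fun ω => (X ω, Q ω, Y ω))) := by
  have hZ : Measurable (fun ω => (Q ω, XR ω)) := hQ.prodMk hXR
  have hT3 : Measurable (fun ω => (X ω, Q ω, Y ω)) := hX.prodMk (hQ.prodMk hY)
  have hW : Measurable (fun ω => (Y ω, X ω, (Q ω, XR ω))) := hY.prodMk (hX.prodMk hZ)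
  have hXZ : Measurable (fun ω => (X ω, (Q ω, XR ω))) := hX.prodMk hZ
  have hXQ : Measurable (fun ω => (X ω, Q ω)) := hX.prodMk hQ
  have h1 : ent μ (fun ω => (Y ω, (Q ω, X ω))) = ent μ (fun ω => (X ω, Q ω, Y ω)) := by
    have he : Function.Injective (fun p : TX × TQ × TY => (p.2.2, (p.2.1, p.1))) := by
      intro p q h; simp only [Prod.ext_iff] at h ⊢; tauto
    exact ent_comp_inj μ (fun ω => (X ω, Q ω, Y ω)) hT3
      (fun p => (p.2.2, (p.2.1, p.1))) he
  have h2 : ent μ (fun ω => (Q ω, X ω)) = ent μ (fun ω => (X ω, Q ω)) := by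
    have he : Function.Injective (fun p : TX × TQ => (p.2, p.1)) := by
      intro p q h; simp only [Prod.ext_iff] at h ⊢; tauto
    exact ent_comp_inj μ (fun ω => (X ω, Q ω)) hXQ (fun p => (p.2, p.1)) he
  have h3 : ent μ (fun ω => (XR ω, (X ω, Q ω, Y ω))) =
      ent μ (fun ω => (Y ω, X ω, (Q ω, XR ω))) := by
    have he : Function.Injective
        (fun p : TY × TX × TQ × TR => (p.2.2.2, (p.2.1, p.2.2.1, p.1))) := by
      intro p q h; simp only [Prod.ext_iff] at h ⊢; tauto
    exact ent_comp_inj μ (fun ω => (Y ω, X ω, (Q ω, XR ω))) hW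
      (fun p => (p.2.2.2, (p.2.1, p.2.2.1, p.1))) he
  have h4 : ent μ (fun ω => (XR ω, (X ω, Q ω))) =
      ent μ (fun ω => (X ω, (Q ω, XR ω))) := by
    have he : Function.Injective (fun p : TX × TQ × TR => (p.2.2, (p.1, p.2.1))) := by
      intro p q h; simp only [Prod.ext_iff] at h ⊢; tauto
    exact ent_comp_inj μ (fun ω => (X ω, (Q ω, XR ω))) hXZ
      (fun p => (p.2.2, (p.1, p.2.1))) he
  have hce := ci_ent μ Y X (fun ω => (Q ω, XR ω)) hY hX hZ hCI
  simp only [condEnt]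
  linarith [h1, h2, h3, h4, hce]
end

section
/- Let Ω be a probability space and let Q, X, Y be measurable random variables on Ω taking values in finite (nonempty, measurable-singleton) types, and suppose X_R = e(Q, X) for a measurable function e (the relevant sentences are a deterministic function of the query and the input). If Y is conditionally independent of X given (Q, X_R), then I[Y : ⟨Q, X⟩] = I[Y : ⟨Q, X_R⟩], i.e. the causal effect of the irrelevant sentences CE(X_{R^c}) = I[Y : ⟨Q, X_R⟩] − I[Y : ⟨Q, X⟩] equals 0, and consequently H[Y | ⟨Q, X⟩] = H[Y | ⟨Q, X_R⟩]. -/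
open MeasureTheory ProbabilityTheory

section Aux

private lemma phi_mul_div' {b a c : ℝ} (hb : 0 ≤ b) (ha : 0 ≤ a) (hc : 0 < c) :
    (b * a / c) * Real.log (b * a / c)
      = (b * a / c) * (Real.log b + Real.log a - Real.log c) := by
  rcases eq_or_lt_of_le hb with hb0 | hb0
  · simp [← hb0]
  rcases eq_or_lt_of_le ha with ha0 | ha0
  · simp [← ha0]
  rw [Real.log_div (by positivity) hc.ne', Real.log_mul hb0.ne' ha0.ne']

private lemma key_lemma' {ιy ιx : Type*} [Fintype ιy] [Fintype ιx]
    (c : ℝ) (b : ιy → ℝ) (a : ιx → ℝ) (j : ιy → ιx → ℝ)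
    (hb : ∀ y, 0 ≤ b y) (ha : ∀ x, 0 ≤ a x)
    (hbc : ∑ y, b y = c) (hac : ∑ x, a x = c)
    (hjb : ∀ y x, j y x ≤ b y) (hjn : ∀ y x, 0 ≤ j y x)
    (hCI : ∀ y x, b y * a x = j y x * c) :
    (∑ x, a x * Real.log (a x)) - ∑ y, ∑ x, j y x * Real.log (j y x)
      = c * Real.log c - ∑ y, b y * Real.log (b y) := by
  have hc : 0 ≤ c := hbc ▸ Finset.sum_nonneg fun y _ => hb y
  rcases eq_or_lt_of_le hc with hc0 | hc0
  · have hb0 : ∀ y, b y = 0 := fun y =>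
      (Finset.sum_eq_zero_iff_of_nonneg (fun y _ => hb y)).1 (hbc.trans hc0.symm) y
        (Finset.mem_univ y)
    have ha0 : ∀ x, a x = 0 := fun x =>
      (Finset.sum_eq_zero_iff_of_nonneg (fun x _ => ha x)).1 (hac.trans hc0.symm) x
        (Finset.mem_univ x)
    have hj0 : ∀ y x, j y x = 0 := fun y x => le_antisymm ((hjb y x).trans (hb0 y).le) (hjn y x)
    simp [hb0, ha0, hj0, ← hc0]
  · have hjeq : ∀ y x, j y x = b y * a x / c := by
      intro y x
      field_simp
      linarith [hCI y x]
    have hrow : ∀ y, ∑ x, j y x * Real.log (j y x)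
        = b y * Real.log (b y) + (b y / c) * ∑ x, a x * Real.log (a x) - b y * Real.log c := by
      intro y
      have h1 : ∀ x, j y x * Real.log (j y x)
          = (b y * Real.log (b y) / c) * a x + (b y / c) * (a x * Real.log (a x))
            - (b y * Real.log c / c) * a x := by
        intro x
        rw [hjeq y x, phi_mul_div' (hb y) (ha x) hc0]
        ring
      rw [Finset.sum_congr rfl fun x _ => h1 x, Finset.sum_sub_distrib, Finset.sum_add_distrib,
        ← Finset.mul_sum, ← Finset.mul_sum, ← Finset.mul_sum, hac]
      field_simp
    rw [Finset.sum_congr rfl fun y _ => hrow y, Finset.sum_sub_distrib, Finset.sum_add_distrib,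
      ← Finset.sum_mul, ← Finset.sum_div, ← Finset.sum_mul, hbc]
    field_simp
    ring

private lemma ent_map' {Ω α : Type*} [MeasurableSpace Ω] [MeasurableSpace α] [Fintype α]
    [MeasurableSingletonClass α] (μ : Measure Ω) {W : Ω → α} (hW : Measurable W) :
    ent μ W = -∑ a : α, (μ {ω | W ω = a}).toReal * Real.log (μ {ω | W ω = a}).toReal := by
  unfold ent
  congr 1
  refine Finset.sum_congr rfl fun a _ => ?_
  rw [Measure.map_apply hW (measurableSet_singleton a)]
  rfl

private lemma sum_fiber' {Ω β : Type*} [MeasurableSpace Ω] [Fintype β] [MeasurableSpace β]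
    [MeasurableSingletonClass β] (μ : Measure Ω) [IsProbabilityMeasure μ]
    {W : Ω → β} (hW : Measurable W) (s : Set Ω) (hs : MeasurableSet s) :
    ∑ b : β, (μ ({ω | W ω = b} ∩ s)).toReal = (μ s).toReal := by
  rw [← ENNReal.toReal_sum (fun b _ => measure_ne_top μ _)]
  congr 1
  have hu : s = ⋃ b : β, ({ω | W ω = b} ∩ s) := by ext ω; simp
  have hdisj : Pairwise (Function.onFun Disjoint fun b => {ω | W ω = b} ∩ s) := by
    intro b b' hne
    simp only [Function.onFun, Set.disjoint_left]
    rintro ω ⟨hb, -⟩ ⟨hb', -⟩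
    exact hne (hb ▸ hb'.symm ▸ rfl)
  have hmeas : ∀ b : β, MeasurableSet ({ω | W ω = b} ∩ s) := fun b =>
    (hW (measurableSet_singleton b)).inter hs
  conv_rhs => rw [hu, measure_iUnion hdisj hmeas, tsum_fintype]

end Aux

variable {Ω TQ TX TR TY : Type*} [MeasurableSpace Ω]
  [MeasurableSpace TQ] [Fintype TQ] [Nonempty TQ] [MeasurableSingletonClass TQ]
  [MeasurableSpace TX] [Fintype TX] [Nonempty TX] [MeasurableSingletonClass TX]
  [MeasurableSpace TR] [Fintype TR] [Nonempty TR] [MeasurableSingletonClass TR]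
  [MeasurableSpace TY] [Fintype TY] [Nonempty TY] [MeasurableSingletonClass TY]

/-- Examples 1 and 2 of the paper: if `X_R = e(Q, X)` is a deterministic (measurable)
function of the query and the input and `Y ⟂ X | (Q, X_R)`, then the causal effect of the
irrelevant sentences vanishes: `I[Y : ⟨Q, X⟩] = I[Y : ⟨Q, X_R⟩]`, and consequently
`H[Y | ⟨Q, X⟩] = H[Y | ⟨Q, X_R⟩]`. -/
theorem stmt7 (μ : Measure Ω) [IsProbabilityMeasure μ]
    (Q : Ω → TQ) (X : Ω → TX) (XR : Ω → TR) (Y : Ω → TY)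
    (hQ : Measurable Q) (hX : Measurable X) (hXR : Measurable XR) (hY : Measurable Y)
    (e : TQ × TX → TR) (he : Measurable e)
    (hdet : XR = fun ω => e (Q ω, X ω))
    (hCI : CondIndepGiven μ Y X (fun ω => (Q ω, XR ω))) :
    mutInfo μ Y (fun ω => (Q ω, X ω)) = mutInfo μ Y (fun ω => (Q ω, XR ω)) ∧
      condEnt μ Y (fun ω => (Q ω, X ω)) = condEnt μ Y (fun ω => (Q ω, XR ω)) := by
  classical
  have hdet' : ∀ ω, XR ω = e (Q ω, X ω) := fun ω => congrFun hdet ω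
  have hZ : Measurable fun ω => (Q ω, XR ω) := hQ.prodMk hXR
  have hW : Measurable fun ω => (Q ω, X ω) := hQ.prodMk hX
  -- real-valued probabilities
  set cP : TQ × TR → ℝ := fun z => (μ {ω | (Q ω, XR ω) = z}).toReal with hcP
  set bP : TY → TQ × TR → ℝ :=
    fun y z => (μ {ω | Y ω = y ∧ (Q ω, XR ω) = z}).toReal with hbP
  set aP : TX → TQ × TR → ℝ :=
    fun x z => (μ {ω | X ω = x ∧ (Q ω, XR ω) = z}).toReal with haP
  set jP : TY → TX → TQ × TR → ℝ :=
    fun y x z => (μ {ω | Y ω = y ∧ X ω = x ∧ (Q ω, XR ω) = z}).toReal with hjP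
  have hZset : ∀ z : TQ × TR, MeasurableSet {ω | (Q ω, XR ω) = z} := fun z =>
    hZ (measurableSet_singleton z)
  -- fiber sums
  have hbsum : ∀ z, ∑ y, bP y z = cP z := by
    intro z
    have := sum_fiber' μ hY {ω | (Q ω, XR ω) = z} (hZset z)
    simpa [bP, cP, Set.inter_def] using this
  have hasum : ∀ z, ∑ x, aP x z = cP z := by
    intro z
    have := sum_fiber' μ hX {ω | (Q ω, XR ω) = z} (hZset z)
    simpa [aP, cP, Set.inter_def] using this
  -- nonnegativity and monotonicity
  have hbnn : ∀ y z, 0 ≤ bP y z := fun _ _ => ENNReal.toReal_nonneg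
  have hann : ∀ x z, 0 ≤ aP x z := fun _ _ => ENNReal.toReal_nonneg
  have hjnn : ∀ y x z, 0 ≤ jP y x z := fun _ _ _ => ENNReal.toReal_nonneg
  have hjb : ∀ y x z, jP y x z ≤ bP y z := by
    intro y x z
    refine ENNReal.toReal_mono (measure_ne_top μ _) (measure_mono ?_)
    intro ω hω
    exact ⟨hω.1, hω.2.2⟩
  -- conditional independence in the reals
  have hCIr : ∀ y x z, bP y z * aP x z = jP y x z * cP z := by
    intro y x z
    have := hCI y x z
    have h2 := congrArg ENNReal.toReal this
    rw [ENNReal.toReal_mul, ENNReal.toReal_mul] at h2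
    exact h2
  -- the per-fiber identity
  have hkey : ∀ z, (∑ x, aP x z * Real.log (aP x z))
      - ∑ y, ∑ x, jP y x z * Real.log (jP y x z)
      = cP z * Real.log (cP z) - ∑ y, bP y z * Real.log (bP y z) := by
    intro z
    exact key_lemma' (cP z) (fun y => bP y z) (fun x => aP x z) (fun y x => jP y x z)
      (fun y => hbnn y z) (fun x => hann x z) (hbsum z) (hasum z)
      (fun y x => hjb y x z) (fun y x => hjnn y x z) (fun y x => hCIr y x z)
  -- entropy computations
  have h1 : ent μ (fun ω => (Q ω, XR ω)) = -∑ z : TQ × TR, cP z * Real.log (cP z) :=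
    ent_map' μ hZ
  have h2 : ent μ (fun ω => (Y ω, (Q ω, XR ω)))
      = -∑ z : TQ × TR, ∑ y : TY, bP y z * Real.log (bP y z) := by
    rw [ent_map' μ (hY.prodMk hZ)]
    rw [Fintype.sum_prod_type, Finset.sum_comm]
    congr 1
    refine Finset.sum_congr rfl fun z _ => Finset.sum_congr rfl fun y _ => ?_
    have : {ω | (Y ω, (Q ω, XR ω)) = (y, z)} = {ω | Y ω = y ∧ (Q ω, XR ω) = z} := by
      ext ω; simp [Prod.ext_iff]
    rw [this]
  have h3 : ent μ (fun ω => (Q ω, X ω))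
      = -∑ z : TQ × TR, ∑ x : TX, aP x z * Real.log (aP x z) := by
    rw [ent_map' μ hW]
    congr 1
    refine Eq.symm ?_
    calc ∑ z : TQ × TR, ∑ x : TX, aP x z * Real.log (aP x z)
        = ∑ q : TQ, ∑ r : TR, ∑ x : TX, aP x (q, r) * Real.log (aP x (q, r)) := by
          simp only [Fintype.sum_prod_type]
      _ = ∑ q : TQ, ∑ x : TX, ∑ r : TR, aP x (q, r) * Real.log (aP x (q, r)) :=
          Finset.sum_congr rfl fun q _ => Finset.sum_comm
      _ = ∑ q : TQ, ∑ x : TX, (μ {ω | (Q ω, X ω) = (q, x)}).toReal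
            * Real.log (μ {ω | (Q ω, X ω) = (q, x)}).toReal := by
          refine Finset.sum_congr rfl fun q _ => Finset.sum_congr rfl fun x _ => ?_
          rw [Finset.sum_eq_single (e (q, x))]
          · have hset : {ω | X ω = x ∧ (Q ω, XR ω) = (q, e (q, x))}
                = {ω | (Q ω, X ω) = (q, x)} := by
              ext ω
              simp only [Set.mem_setOf_eq, Prod.ext_iff, hdet']
              constructor
              · rintro ⟨hx, hq, -⟩; exact ⟨hq, hx⟩
              · rintro ⟨hq, hx⟩; exact ⟨hx, hq, by rw [hq, hx]⟩
            simp only [aP, hset]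
          · intro r _ hr
            have hset : {ω | X ω = x ∧ (Q ω, XR ω) = (q, r)} = (∅ : Set Ω) := by
              ext ω
              simp only [Set.mem_setOf_eq, Prod.ext_iff, hdet', Set.mem_empty_iff_false,
                iff_false]
              rintro ⟨hx, hq, hrr⟩
              exact hr (by rw [← hrr, hq, hx])
            simp only [aP, hset, measure_empty, ENNReal.toReal_zero, zero_mul]
          · intro h; exact absurd (Finset.mem_univ _) h
      _ = ∑ p : TQ × TX, (μ {ω | (Q ω, X ω) = p}).toReal
            * Real.log (μ {ω | (Q ω, X ω) = p}).toReal := by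
          simp only [Fintype.sum_prod_type]
  have h4 : ent μ (fun ω => (Y ω, (Q ω, X ω)))
      = -∑ z : TQ × TR, ∑ y : TY, ∑ x : TX, jP y x z * Real.log (jP y x z) := by
    rw [ent_map' μ (hY.prodMk hW)]
    congr 1
    refine Eq.symm ?_
    calc ∑ z : TQ × TR, ∑ y : TY, ∑ x : TX, jP y x z * Real.log (jP y x z)
        = ∑ q : TQ, ∑ r : TR, ∑ y : TY, ∑ x : TX,
            jP y x (q, r) * Real.log (jP y x (q, r)) := by
          simp only [Fintype.sum_prod_type]
      _ = ∑ q : TQ, ∑ y : TY, ∑ x : TX, ∑ r : TR,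
            jP y x (q, r) * Real.log (jP y x (q, r)) := by
          refine Finset.sum_congr rfl fun q _ => ?_
          rw [Finset.sum_comm]
          exact Finset.sum_congr rfl fun y _ => Finset.sum_comm
      _ = ∑ y : TY, ∑ q : TQ, ∑ x : TX, ∑ r : TR,
            jP y x (q, r) * Real.log (jP y x (q, r)) := Finset.sum_comm
      _ = ∑ y : TY, ∑ q : TQ, ∑ x : TX, (μ {ω | (Y ω, (Q ω, X ω)) = (y, q, x)}).toReal
            * Real.log (μ {ω | (Y ω, (Q ω, X ω)) = (y, q, x)}).toReal := by
          refine Finset.sum_congr rfl fun y _ => Finset.sum_congr rfl fun q _ =>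
            Finset.sum_congr rfl fun x _ => ?_
          rw [Finset.sum_eq_single (e (q, x))]
          · have hset : {ω | Y ω = y ∧ X ω = x ∧ (Q ω, XR ω) = (q, e (q, x))}
                = {ω | (Y ω, (Q ω, X ω)) = (y, q, x)} := by
              ext ω
              simp only [Set.mem_setOf_eq, Prod.ext_iff, hdet']
              constructor
              · rintro ⟨hy, hx, hq, -⟩; exact ⟨hy, hq, hx⟩
              · rintro ⟨hy, hq, hx⟩; exact ⟨hy, hx, hq, by rw [hq, hx]⟩
            simp only [jP, hset]
          · intro r _ hr
            have hset : {ω | Y ω = y ∧ X ω = x ∧ (Q ω, XR ω) = (q, r)} = (∅ : Set Ω) := by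
              ext ω
              simp only [Set.mem_setOf_eq, Prod.ext_iff, hdet', Set.mem_empty_iff_false,
                iff_false]
              rintro ⟨-, hx, hq, hrr⟩
              exact hr (by rw [← hrr, hq, hx])
            simp only [jP, hset, measure_empty, ENNReal.toReal_zero, zero_mul]
          · intro h; exact absurd (Finset.mem_univ _) h
      _ = ∑ p : TY × TQ × TX, (μ {ω | (Y ω, (Q ω, X ω)) = p}).toReal
            * Real.log (μ {ω | (Y ω, (Q ω, X ω)) = p}).toReal := by
          simp only [Fintype.sum_prod_type]
  -- combine
  have hsum := Finset.sum_congr rfl fun z (_ : z ∈ Finset.univ) => hkey z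
  rw [Finset.sum_sub_distrib, Finset.sum_sub_distrib] at hsum
  have hce : condEnt μ Y (fun ω => (Q ω, X ω)) = condEnt μ Y (fun ω => (Q ω, XR ω)) := by
    unfold condEnt
    rw [h1, h2, h3, h4]
    linarith
  refine ⟨?_, hce⟩
  unfold mutInfo
  unfold condEnt at hce
  linarith
end

section
/- Let Ω be a probability space, n ≥ 1, and let X : Ω → αⁿ be a random vector with values in a finite (measurable-singleton) type α whose coordinates are almost surely pairwise distinct. Let J : Ω → Fin n be uniformly distributed and independent of X, set X_R := (fun ω => X ω (J ω)) (a uniformly randomly selected coordinate of X) and Y := X_R. Then I[Y : X_R] − I[Y : X] = Real.log n; that is, the causal effect of the irrelevant sentences equals log n (here the query Q is trivial/constant). -/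
open MeasureTheory ProbabilityTheory

lemma map_sing {Ω β : Type*} [MeasurableSpace Ω] [MeasurableSpace β] [MeasurableSingletonClass β]
    (μ : Measure Ω) {f : Ω → β} (hf : Measurable f) (b : β) :
    μ.map f {b} = μ (f ⁻¹' {b}) :=
  Measure.map_apply hf (measurableSet_singleton b)

lemma ent_diag {Ω β : Type*} [MeasurableSpace Ω] [MeasurableSpace β] [Fintype β]
    [MeasurableSingletonClass β] (μ : Measure Ω) {Y : Ω → β} (hY : Measurable Y) :
    ent μ (fun ω => (Y ω, Y ω)) = ent μ Y := by
  unfold ent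
  congr 1
  rw [Fintype.sum_prod_type]
  refine Finset.sum_congr rfl fun a _ => ?_
  rw [Finset.sum_eq_single a]
  · rw [map_sing μ (hY.prodMk hY), map_sing μ hY]
    have : (fun ω => (Y ω, Y ω)) ⁻¹' {(a, a)} = Y ⁻¹' {a} := by
      ext ω; simp [Prod.ext_iff]
    rw [this]
  · intro b _ hb
    have : (μ.map fun ω => (Y ω, Y ω)) {(a, b)} = 0 := by
      rw [map_sing μ (hY.prodMk hY)]
      have : (fun ω => (Y ω, Y ω)) ⁻¹' {(a, b)} = ∅ := by
        ext ω
        simp only [Set.mem_preimage, Set.mem_singleton_iff, Prod.ext_iff, Set.mem_empty_iff_false,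
          iff_false, not_and]
        intro h1 h2
        exact hb (h1 ▸ h2 ▸ rfl)
      rw [this, measure_empty]
    simp [this]
  · simp

/-- Example 3 of the paper (worst case): `X : Ω → αⁿ` has a.s. pairwise-distinct
coordinates, `J` is uniform on `Fin n` and independent of `X`, and
`Y = X_R = (ω ↦ X ω (J ω))` is a uniformly chosen coordinate. Then the causal effect of
the irrelevant sentences is `I[Y : X_R] − I[Y : X] = log n`. -/
theorem stmt8 {Ω α : Type*} [MeasurableSpace Ω] [MeasurableSpace α]
    [Fintype α] [Nonempty α] [MeasurableSingletonClass α]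
    (μ : Measure Ω) [IsProbabilityMeasure μ] (n : ℕ) (hn : 1 ≤ n)
    (X : Ω → (Fin n → α)) (J : Ω → Fin n)
    (hX : Measurable X) (hJ : Measurable J)
    (hinj : ∀ᵐ ω ∂μ, Function.Injective (X ω))
    (hunif : ∀ j : Fin n, μ (J ⁻¹' {j}) = (n : ENNReal)⁻¹)
    (hindep : IndepFun J X μ) :
    mutInfo μ (fun ω => X ω (J ω)) (fun ω => X ω (J ω)) -
      mutInfo μ (fun ω => X ω (J ω)) X = Real.log n := by
  classical
  have hnR : (0 : ℝ) < n := by exact_mod_cast hn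
  set Y : Ω → α := fun ω => X ω (J ω) with hYdef
  have hYm : Measurable Y := by
    apply measurable_to_countable'
    intro a
    have hset : Y ⁻¹' {a} = ⋃ j : Fin n, (J ⁻¹' {j} ∩ X ⁻¹' ((fun x => x j) ⁻¹' {a})) := by
      ext ω
      simp only [Set.mem_preimage, Set.mem_singleton_iff, Set.mem_iUnion, Set.mem_inter_iff]
      constructor
      · intro h; exact ⟨J ω, rfl, h⟩
      · rintro ⟨j, hj, hx⟩
        show X ω (J ω) = a
        rw [hj]; exact hx
    rw [hset]
    exact MeasurableSet.iUnion fun j =>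
      (hJ (measurableSet_singleton j)).inter
        (hX ((measurable_pi_apply j) (measurableSet_singleton a)))
  set q : (Fin n → α) → ENNReal := fun x => μ (X ⁻¹' {x}) with hqdef
  have hqt : ∀ x, q x ≠ ⊤ := fun x => measure_ne_top μ _
  set Q : (Fin n → α) → ℝ := fun x => (q x).toReal with hQdef
  have hq0 : ∀ x, ¬ Function.Injective x → q x = 0 := by
    intro x hx
    have h0 : μ {ω | ¬ Function.Injective (X ω)} = 0 := ae_iff.mp hinj
    refine measure_mono_null ?_ h0
    intro ω hω
    simp only [Set.mem_preimage, Set.mem_singleton_iff] at hω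
    show ¬ Function.Injective (X ω)
    rw [hω]; exact hx
  -- joint distribution of (Y, X)
  have hjoint : ∀ (a : α) (x : Fin n → α),
      μ.map (fun ω => (Y ω, X ω)) {(a, x)} =
        ((Finset.univ.filter fun j : Fin n => x j = a).card : ENNReal) *
          ((n : ENNReal)⁻¹ * q x) := by
    intro a x
    rw [map_sing μ (hYm.prodMk hX)]
    have hset : (fun ω => (Y ω, X ω)) ⁻¹' {(a, x)} =
        ⋃ j ∈ Finset.univ.filter fun j : Fin n => x j = a, (J ⁻¹' {j} ∩ X ⁻¹' {x}) := by
      ext ω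
      simp only [Set.mem_preimage, Set.mem_singleton_iff, Prod.ext_iff, Finset.mem_filter,
        Finset.mem_univ, true_and, Set.mem_iUnion, Set.mem_inter_iff, exists_prop]
      constructor
      · rintro ⟨hy, hxx⟩
        refine ⟨J ω, ?_, rfl, hxx⟩
        rw [← hxx]; exact hy
      · rintro ⟨j, hja, hjω, hxx⟩
        refine ⟨?_, hxx⟩
        show X ω (J ω) = a
        rw [hjω, hxx]; exact hja
    rw [hset, measure_biUnion_finset]
    · calc ∑ j ∈ Finset.univ.filter fun j : Fin n => x j = a, μ (J ⁻¹' {j} ∩ X ⁻¹' {x})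
          = ∑ _j ∈ Finset.univ.filter fun j : Fin n => x j = a, (n : ENNReal)⁻¹ * q x := by
            refine Finset.sum_congr rfl fun j _ => ?_
            rw [hindep.measure_inter_preimage_eq_mul {j} {x} (measurableSet_singleton j)
              (measurableSet_singleton x), hunif j]
        _ = _ := by rw [Finset.sum_const, nsmul_eq_mul]
    · intro i _ j hj hij
      apply Set.disjoint_left.mpr
      rintro ω ⟨hi, _⟩ ⟨hj2, _⟩
      exact hij (hi.symm.trans hj2)
    · intro j _
      exact (hJ (measurableSet_singleton j)).inter (hX (measurableSet_singleton x))
  -- entropy of (Y, X)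
  have hB : ent μ (fun ω => (Y ω, X ω)) = ent μ X + Real.log n := by
    have hsum1 : ∑ x : Fin n → α, Q x = 1 := by
      have h1 : ∑ x : Fin n → α, q x = 1 := by
        rw [sum_measure_preimage_singleton Finset.univ
          (fun y _ => hX (measurableSet_singleton y))]
        simp
      rw [hQdef]
      simp only
      rw [← ENNReal.toReal_sum (fun x _ => hqt x), h1, ENNReal.toReal_one]
    have hEX : ent μ X = - ∑ x : Fin n → α, Q x * Real.log (Q x) := by
      unfold ent
      congr 1
      refine Finset.sum_congr rfl fun x _ => ?_
      rw [map_sing μ hX]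
    unfold ent
    rw [Fintype.sum_prod_type, Finset.sum_comm]
    have hterm : ∀ x : Fin n → α,
        (∑ a : α, ((μ.map fun ω => (Y ω, X ω)) {(a, x)}).toReal *
          Real.log ((μ.map fun ω => (Y ω, X ω)) {(a, x)}).toReal)
        = Q x * Real.log (Q x) - Q x * Real.log n := by
      intro x
      set c : α → ℕ := fun a => (Finset.univ.filter fun j : Fin n => x j = a).card with hcdef
      have htr : ∀ a : α, ((μ.map fun ω => (Y ω, X ω)) {(a, x)}).toReal
          = (c a : ℝ) * ((n : ℝ)⁻¹ * Q x) := by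
        intro a
        rw [hjoint a x, ENNReal.toReal_mul, ENNReal.toReal_mul]
        simp [ENNReal.toReal_inv]
        rfl
      by_cases hxi : Function.Injective x
      · have hc1 : ∀ a, c a ≤ 1 := by
          intro a
          rw [hcdef]
          refine Finset.card_le_one.mpr fun i hi j hj => ?_
          simp only [Finset.mem_filter] at hi hj
          exact hxi (hi.2.trans hj.2.symm)
        have hcs : ∑ a : α, (c a : ℝ) = n := by
          have : ∑ a : α, c a = n := by
            rw [hcdef]
            simp only [Finset.card_filter]
            rw [Finset.sum_comm]
            simp
          exact_mod_cast this
        set u : ℝ := (n : ℝ)⁻¹ * Q x with hudef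
        have hterm2 : ∀ a : α, ((c a : ℝ) * u) * Real.log ((c a : ℝ) * u)
            = (c a : ℝ) * (u * Real.log u) := by
          intro a
          rcases Nat.le_one_iff_eq_zero_or_eq_one.mp (hc1 a) with h | h <;> simp [h]
        calc ∑ a : α, ((μ.map fun ω => (Y ω, X ω)) {(a, x)}).toReal *
              Real.log ((μ.map fun ω => (Y ω, X ω)) {(a, x)}).toReal
            = ∑ a : α, (c a : ℝ) * (u * Real.log u) := by
              refine Finset.sum_congr rfl fun a _ => ?_
              rw [htr a]; exact hterm2 a
          _ = (n : ℝ) * (u * Real.log u) := by rw [← Finset.sum_mul, hcs]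
          _ = Q x * Real.log u := by
              rw [hudef]; field_simp
          _ = Q x * Real.log (Q x) - Q x * Real.log n := by
              by_cases hQ0 : Q x = 0
              · simp [hQ0]
              · rw [hudef, Real.log_mul (by positivity) hQ0, Real.log_inv]
                ring
      · have hq : q x = 0 := hq0 x hxi
        have hQ : Q x = 0 := by rw [hQdef]; simp [hq]
        calc ∑ a : α, ((μ.map fun ω => (Y ω, X ω)) {(a, x)}).toReal *
              Real.log ((μ.map fun ω => (Y ω, X ω)) {(a, x)}).toReal
            = ∑ a : α, (0 : ℝ) := by
              refine Finset.sum_congr rfl fun a _ => ?_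
              rw [htr a, hQ]
              simp
          _ = Q x * Real.log (Q x) - Q x * Real.log n := by simp [hQ]
    calc - ∑ x : Fin n → α, ∑ a : α, ((μ.map fun ω => (Y ω, X ω)) {(a, x)}).toReal *
            Real.log ((μ.map fun ω => (Y ω, X ω)) {(a, x)}).toReal
        = - ∑ x : Fin n → α, (Q x * Real.log (Q x) - Q x * Real.log n) := by
          rw [Finset.sum_congr rfl fun x _ => hterm x]
      _ = (- ∑ x : Fin n → α, Q x * Real.log (Q x)) +
            (∑ x : Fin n → α, Q x) * Real.log n := by
          rw [Finset.sum_sub_distrib, ← Finset.sum_mul]; ring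
      _ = ent μ X + Real.log n := by rw [hEX, hsum1, one_mul]
  have hA : ent μ (fun ω => (Y ω, Y ω)) = ent μ Y := ent_diag μ hYm
  unfold mutInfo
  rw [hA, hB]
  ring
end
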